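/- Deterministic-adversary counting: with W(X|h) the recursively-defined relative width, for every history h and every deterministic adversary τ (a function from odd-length histories to Σ), the number of words π with hπ ∈ X that are consistent with τ at all odd positions is at least W(X|h). -/

import Mathlib

open Classical in
noncomputable def widthAux {α : Type*} [Fintype α] [Nonempty α] (X : Set (List α)) :
    ℕ → List α → ℕ
  | 0, h => if h ∈ X then 1 else 0
  | g + 1, h =>
    if Even h.length then ∑ u : α, widthAux X g (h ++ [u])
    else Finset.univ.inf' Finset.univ_nonempty fun u : α => widthAux X g (h ++ [u])

noncomputable def width {α : Type*} [Fintype α] [Nonempty α] (n : ℕ) (X : Set (List α))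
    (h : List α) : ℕ :=
  widthAux X (n - h.length) h

/-- `π` (a continuation of `h`) is consistent with the deterministic adversary `t`:
at every odd position `i` of `h ++ π` beyond `h`, the symbol played equals `t`
applied to the preceding prefix. -/
def ConsistentWith {α : Type*} (n : ℕ) (h : List α) (t : List α → α) (π : List α) : Prop :=
  ∀ i : ℕ, h.length ≤ i → i < n → Odd i →
    (h ++ π).take (i + 1) = (h ++ π).take i ++ [t ((h ++ π).take i)]

/-! Induction on the number of remaining moves: the adversary's move at an odd position is
forced to be `t h`, which bounds the minimum in `widthAux`, while the first symbols of the
completions at an even position partition them, which matches the sum. -/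

theorem Set.sum_ncard_setOf_cons_mem {α : Type*} [Fintype α] {g : ℕ}
    (T : Set (Fin (g + 1) → α)) :
    ∑ u : α, {f : Fin g → α | Fin.cons u f ∈ T}.ncard = T.ncard := by
  calc ∑ u : α, {f : Fin g → α | Fin.cons u f ∈ T}.ncard
      = Nat.card (Σ u : α, {f : Fin g → α // Fin.cons u f ∈ T}) := Nat.card_sigma.symm
    _ = Nat.card {c : α × (Fin g → α) // Fin.cons c.1 c.2 ∈ T} :=
      Nat.card_congr (Equiv.subtypeProdEquivSigmaSubtype fun u f => Fin.cons u f ∈ T).symm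
    _ = T.ncard := Nat.card_congr ((Fin.consEquiv fun _ => α).subtypeEquiv fun _ => Iff.rfl)

section Consistency

variable {α : Type*} {n : ℕ} {h : List α} {t : List α → α}

theorem consistentWith_nil (hn : n ≤ h.length) : ConsistentWith n h t [] :=
  fun _ hi hin _ => absurd (hin.trans_le hn) (not_lt.mpr hi)

theorem ConsistentWith.cons {u : α} {π : List α} (hu : Odd h.length → u = t h)
    (hπ : ConsistentWith n (h ++ [u]) t π) : ConsistentWith n h t (u :: π) := by
  intro i hi hin hodd
  rw [List.append_cons]
  rcases hi.eq_or_lt with rfl | hlt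
  · have hprefix : (h ++ [u] ++ π).take h.length = h := by simp
    have hprefix_succ : (h ++ [u] ++ π).take (h.length + 1) = h ++ [u] := by
      rw [List.take_append_of_le_length (by simp)]; simp
    rw [hprefix, hprefix_succ, hu hodd]
  · exact hπ i (by simpa using hlt) hin hodd

end Consistency

def consistentCompletions {α : Type*} (n : ℕ) (X : Set (List α)) (t : List α → α)
    (h : List α) (g : ℕ) : Set (Fin g → α) :=
  {f | h ++ List.ofFn f ∈ X ∧ ConsistentWith n h t (List.ofFn f)}

theorem consistentCompletions_append_subset {α : Type*} {n : ℕ} {X : Set (List α)}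
    {t : List α → α} {h : List α} {g : ℕ} {u : α} (hu : Odd h.length → u = t h) :
    consistentCompletions n X t (h ++ [u]) g ⊆
      {f | Fin.cons u f ∈ consistentCompletions n X t h (g + 1)} := by
  rintro f ⟨hmem, hcons⟩
  simp only [Set.mem_ofPred_eq, consistentCompletions, List.ofFn_cons]
  exact ⟨by simpa using hmem, hcons.cons hu⟩

theorem widthAux_le_ncard_consistentCompletions {α : Type*} [Fintype α] [Nonempty α]
    (n : ℕ) (X : Set (List α)) (t : List α → α) (g : ℕ) (h : List α)
    (hn : n ≤ h.length + g) :
    widthAux X g h ≤ (consistentCompletions n X t h g).ncard := by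
  induction g generalizing h with
  | zero =>
    rw [widthAux]
    split_ifs with hmem
    · exact (Set.ncard_pos).mpr ⟨Fin.elim0, by simpa using hmem, consistentWith_nil hn⟩
    · exact Nat.zero_le _
  | succ g ih =>
    set C := consistentCompletions n X t h (g + 1)
    have hstep : ∀ u, (Odd h.length → u = t h) →
        widthAux X g (h ++ [u]) ≤ {f | Fin.cons u f ∈ C}.ncard := fun u hu =>
      (ih (h ++ [u]) (by rw [List.length_append, List.length_singleton]; omega)).trans
        (Set.ncard_le_ncard (consistentCompletions_append_subset hu))
    rw [widthAux]
    split_ifs with heven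
    · calc ∑ u : α, widthAux X g (h ++ [u])
          ≤ ∑ u : α, {f | Fin.cons u f ∈ C}.ncard :=
            Finset.sum_le_sum fun u _ => hstep u fun hodd =>
              absurd hodd (Nat.not_odd_iff_even.mpr heven)
        _ = C.ncard := Set.sum_ncard_setOf_cons_mem C
    · calc Finset.univ.inf' Finset.univ_nonempty (fun u : α => widthAux X g (h ++ [u]))
          ≤ widthAux X g (h ++ [t h]) := Finset.inf'_le _ (Finset.mem_univ _)
        _ ≤ {f | Fin.cons (t h) f ∈ C}.ncard := hstep (t h) fun _ => rfl
        _ ≤ C.ncard := by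
            rw [← Set.sum_ncard_setOf_cons_mem C]
            exact Finset.single_le_sum (f := fun u => {f | Fin.cons u f ∈ C}.ncard)
              (fun _ _ => Nat.zero_le _) (Finset.mem_univ _)

theorem width_le_consistent_count_general {α : Type*} [Fintype α] [Nonempty α] (n : ℕ)
    (X : Set (List α))
    (h : List α) (t : List α → α) :
    width n X h ≤
      Set.ncard {f : Fin (n - h.length) → α |
        h ++ List.ofFn f ∈ X ∧ ConsistentWith n h t (List.ofFn f)} :=
  widthAux_le_ncard_consistentCompletions n X t (n - h.length) h (by omega)

theorem width_le_consistent_count {α : Type*} [Fintype α] [Nonempty α] (n : ℕ)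
    (X : Set (List α)) (hX : X ⊆ {w | w.length = n})
    (h : List α) (hh : h.length ≤ n) (t : List α → α) :
    width n X h ≤
      Set.ncard {f : Fin (n - h.length) → α |
        h ++ List.ofFn f ∈ X ∧ ConsistentWith n h t (List.ofFn f)} :=
  width_le_consistent_count_general n X h t
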